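/- Let k ≥ 2 be an integer and let θ be a real number with 0 < θ < 2√(k−1). Let t₁ ≥ 4 be the integer with λ^{(t₁−3)} < θ ≤ λ^{(t₁−2)} and set c₁ = −F_{t₁−2}(θ)/G_{t₁−4}(θ); let t₂ ≥ 3 be the integer with r^{(t₂−2)} < θ ≤ r^{(t₂−1)} and set c₂ = −F_{t₂−1}(θ)/𝒢_{t₂−2}(θ). Then M(k,t₁,c₁) ≤ N(k,t₂,c₂), and equality holds only if t₁ = t₂, θ = λ^{(t₁−2)}, c₁ = 1 and c₂ = k. -/

import Mathlib

/-!
With `Q = √(k-1)` one has `G_n(Q y) = Q^n S_n(y)` for the rescaled Chebyshev polynomials `S_n`,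
hence `sin φ · G_n(2Q cos φ) = Q^n sin((n+1)φ)`, and `𝒢_{n+1} = G_{n+1} + G_n`. So
`λ^{(n)} = 2Q cos(π/(n+1))`; writing `θ = 2Q cos φ`, the choice of `t₁` means
`π/(t₁-1) ≤ φ < π/(t₁-2)`, which gives `G_{t₁-4}(θ), G_{t₁-3}(θ) > 0 ≥ G_{t₁-2}(θ)`, and the sign
of `𝒢_{n+1}` at `λ^{(n)}` and above `λ^{(n+1)}` forces `t₂ ∈ {t₁ - 1, t₁}`. In both cases the
three-term recurrence makes `c₁`, `c₂`, and hence `N - M`, rational functions of these three values,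
and `N - M` factors into terms of known sign. It vanishes only for `t₂ = t₁` and
`G_{t₁-2}(θ) = 0`, i.e. `θ = λ^{(t₁-2)}`.
-/

open Polynomial Matrix

/-- The orthogonal polynomials `F_i` defined by `F_0 = 1`, `F_1 = x`, `F_2 = x^2 - k`,
and `F_i = x F_{i-1} - (k-1) F_{i-2}` for `i ≥ 3`. -/
noncomputable def Fpoly (k : ℝ) : ℕ → Polynomial ℝ
  | 0 => 1
  | 1 => X
  | 2 => X ^ 2 - C k
  | (n + 3) => X * Fpoly k (n + 2) - C (k - 1) * Fpoly k (n + 1)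

/-- `G_i = ∑_{j=0}^{⌊i/2⌋} F_{i-2j}`. -/
noncomputable def Gpoly (k : ℝ) (i : ℕ) : Polynomial ℝ :=
  ∑ j ∈ Finset.range (i / 2 + 1), Fpoly k (i - 2 * j)

/-- `M(k,t,c) = 2 (∑_{i=0}^{t-4} (k-1)^i + (k-1)^{t-3}/c + (k-1)^{t-2}/c)`. -/
noncomputable def Mbound (k t : ℕ) (c : ℝ) : ℝ :=
  2 * ((∑ i ∈ Finset.range (t - 3), ((k : ℝ) - 1) ^ i) +
    ((k : ℝ) - 1) ^ (t - 3) / c + ((k : ℝ) - 1) ^ (t - 2) / c)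

/-- `𝒢_j = ∑_{i=0}^{j} F_i`. -/
noncomputable def calG (k : ℝ) (j : ℕ) : Polynomial ℝ :=
  ∑ i ∈ Finset.range (j + 1), Fpoly k i

/-- `N(k,t,c) = 1 + ∑_{i=0}^{t-3} k(k-1)^i + k(k-1)^{t-2}/c`. -/
noncomputable def Nbound (k t : ℕ) (c : ℝ) : ℝ :=
  1 + (∑ i ∈ Finset.range (t - 2), (k : ℝ) * ((k : ℝ) - 1) ^ i) +
    (k : ℝ) * ((k : ℝ) - 1) ^ (t - 2) / c


namespace Polynomial.Chebyshev

variable {R : Type*} [CommRing R] [LinearOrder R] [IsStrictOrderedRing R]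

theorem S_eval_pos_of_two_le {y : R} (hy : 2 ≤ y) (n : ℕ) : 0 < (S R n).eval y := by
  have key : ∀ n : ℕ, 1 ≤ (S R n).eval y ∧ (S R n).eval y ≤ (S R (n + 1)).eval y := by
    intro n
    induction n with
    | zero =>
      simp only [Nat.cast_zero, zero_add, S_zero, S_one, eval_one, eval_X]
      exact ⟨le_rfl, by linarith⟩
    | succ n ih =>
      obtain ⟨h1, h2⟩ := ih
      have hrec : (S R ((n : ℤ) + 2)).eval y
          = y * (S R ((n : ℤ) + 1)).eval y - (S R (n : ℤ)).eval y := by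
        rw [S_add_two]; simp
      refine ⟨h1.trans h2, ?_⟩
      push_cast
      rw [add_assoc, one_add_one_eq_two, hrec]
      nlinarith
  exact zero_lt_one.trans_le (key n).1

end Polynomial.Chebyshev

section Recurrences

variable (k : ℝ)

theorem Gpoly_zero : Gpoly k 0 = 1 := by simp [Gpoly, Fpoly]

theorem Gpoly_one : Gpoly k 1 = X := by simp [Gpoly, Fpoly]

theorem Gpoly_add_two_eq_Fpoly_add (i : ℕ) : Gpoly k (i + 2) = Fpoly k (i + 2) + Gpoly k i := by
  rw [Gpoly, show (i + 2) / 2 + 1 = i / 2 + 1 + 1 by omega, Finset.sum_range_succ']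
  simp only [Nat.mul_zero, Nat.sub_zero, Gpoly, add_comm (Fpoly k (i + 2))]
  congr 1
  refine Finset.sum_congr rfl fun j _ => ?_
  congr 1
  omega

theorem Fpoly_add_two_eq_sub (i : ℕ) : Fpoly k (i + 2) = Gpoly k (i + 2) - Gpoly k i := by
  rw [Gpoly_add_two_eq_Fpoly_add]; ring

theorem Gpoly_add_two : ∀ i : ℕ, Gpoly k (i + 2) = X * Gpoly k (i + 1) - C (k - 1) * Gpoly k i
  | 0 => by
    rw [Gpoly_add_two_eq_Fpoly_add, Gpoly_zero, Gpoly_one]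
    simp only [Fpoly, map_sub, map_one]
    ring
  | 1 => by
    rw [Gpoly_add_two_eq_Fpoly_add, Gpoly_add_two_eq_Fpoly_add k 0, Gpoly_zero, Gpoly_one]
    simp only [Fpoly, map_sub, map_one]
    ring
  | i + 2 => by
    have ih := Gpoly_add_two i
    rw [Gpoly_add_two_eq_Fpoly_add, Fpoly, Fpoly_add_two_eq_sub, Fpoly_add_two_eq_sub k i,
      show i + 2 + 1 = i + 3 from rfl]
    linear_combination ih

theorem calG_succ_eq_Gpoly_add : ∀ i : ℕ, calG k (i + 1) = Gpoly k (i + 1) + Gpoly k i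
  | 0 => by simp [calG, Finset.sum_range_succ, Fpoly, Gpoly_zero, Gpoly_one, add_comm]
  | i + 1 => by
    rw [calG, Finset.sum_range_succ, ← calG, calG_succ_eq_Gpoly_add i, Fpoly_add_two_eq_sub]
    ring

theorem eval_Gpoly_add_two (x : ℝ) (i : ℕ) :
    (Gpoly k (i + 2)).eval x = x * (Gpoly k (i + 1)).eval x - (k - 1) * (Gpoly k i).eval x := by
  simp [Gpoly_add_two]

end Recurrences

theorem eval_Gpoly_mul {k Q : ℝ} (hQ : Q ^ 2 = k - 1) (y : ℝ) :
    ∀ i : ℕ, (Gpoly k i).eval (Q * y) = Q ^ i * (Chebyshev.S ℝ i).eval y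
  | 0 => by simp [Gpoly_zero]
  | 1 => by simp [Gpoly_one]
  | i + 2 => by
    have h1 := eval_Gpoly_mul hQ y (i + 1)
    have h0 := eval_Gpoly_mul hQ y i
    rw [Gpoly_add_two, eval_sub, eval_mul, eval_mul, eval_X, eval_C, h1, h0]
    push_cast
    rw [Chebyshev.S_add_two]
    simp only [eval_sub, eval_mul, eval_X]
    rw [← hQ]
    ring

theorem sin_mul_eval_Gpoly {k Q : ℝ} (hQ : Q ^ 2 = k - 1) (φ : ℝ) (i : ℕ) :
    Real.sin φ * (Gpoly k i).eval (2 * Q * Real.cos φ) = Q ^ i * Real.sin ((i + 1) * φ) := by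
  have h := Chebyshev.S_two_mul_real_cos φ i
  push_cast at h
  rw [show 2 * Q * Real.cos φ = Q * (2 * Real.cos φ) by ring, eval_Gpoly_mul hQ, ← h]
  ring

theorem pos_of_gt_of_isGreatest_zeros {f : ℝ → ℝ} (hf : Continuous f) {b z y : ℝ}
    (hbig : ∀ x, b ≤ x → 0 < f x) (hz : IsGreatest {x | f x = 0} z) (hy : z < y) : 0 < f y := by
  by_contra! hfy
  have hyb : y < b := lt_of_not_ge fun h => (hbig y h).not_ge hfy
  obtain ⟨w, hw, hw0⟩ : ∃ w ∈ Set.Icc y b, f w = 0 :=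
    intermediate_value_Icc hyb.le hf.continuousOn ⟨hfy, (hbig b le_rfl).le⟩
  exact (hz.2 hw0).not_gt (hy.trans_le hw.1)

open Real

theorem exists_eq_two_mul_cos {Q x : ℝ} (hQ0 : 0 < Q) (hx : |x| ≤ 2 * Q) :
    ∃ χ ∈ Set.Icc 0 π, x = 2 * Q * cos χ := by
  obtain ⟨h1, h2⟩ := abs_le.1 hx
  refine ⟨arccos (x / (2 * Q)), ⟨arccos_nonneg _, arccos_le_pi _⟩, ?_⟩
  rw [cos_arccos (by rw [le_div_iff₀ (by positivity)]; linarith)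
    (by rw [div_le_one (by positivity)]; exact h2)]
  field_simp

theorem pos_of_two_mul_cos_lt {f : ℝ → ℝ} {Q ψ x : ℝ} (hQ0 : 0 < Q) (hψ : ψ ∈ Set.Icc 0 π)
    (hbig : ∀ x, 2 * Q ≤ x → 0 < f x) (hcos : ∀ χ, 0 < χ → χ < ψ → 0 < f (2 * Q * cos χ))
    (hx : 2 * Q * cos ψ < x) : 0 < f x := by
  rcases le_or_gt (2 * Q) x with h | h
  · exact hbig x h
  have hx' : |x| ≤ 2 * Q := abs_le.2 ⟨by nlinarith [neg_one_le_cos ψ], h.le⟩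
  obtain ⟨χ, hχ, rfl⟩ := exists_eq_two_mul_cos hQ0 hx'
  refine hcos χ (lt_of_le_of_ne hχ.1 ?_) ?_
  · rintro rfl
    simp at h
  · exact (strictAntiOn_cos.lt_iff_gt hψ hχ).1 (lt_of_mul_lt_mul_left hx (by positivity))

/-- `λ^{(n)}`, for `Q = √(k-1)`. -/
noncomputable def largestZeroGpoly (Q : ℝ) (n : ℕ) : ℝ := 2 * Q * cos (π / (n + 1))

theorem largestZeroGpoly_strictMono {Q : ℝ} (hQ0 : 0 < Q) : StrictMono (largestZeroGpoly Q) := by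
  refine strictMono_nat_of_lt_succ fun n => ?_
  unfold largestZeroGpoly
  gcongr
  apply cos_lt_cos_of_nonneg_of_le_pi (by positivity)
  · exact div_le_self pi_pos.le (by linarith [n.cast_nonneg (α := ℝ)])
  · gcongr
    linarith

section Zeros

variable {k Q : ℝ}

theorem sin_mul_eval_calG (hQ : Q ^ 2 = k - 1) (φ : ℝ) (i : ℕ) :
    sin φ * (calG k (i + 1)).eval (2 * Q * cos φ)
      = Q ^ i * (Q * sin ((i + 2) * φ) + sin ((i + 1) * φ)) := by
  have h1 := sin_mul_eval_Gpoly hQ φ (i + 1)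
  have h0 := sin_mul_eval_Gpoly hQ φ i
  push_cast at h1
  rw [calG_succ_eq_Gpoly_add, eval_add, mul_add, h1, h0]
  ring_nf

theorem eval_Gpoly_pos_of_two_mul_le (hQ : Q ^ 2 = k - 1) (hQ0 : 0 < Q) {x : ℝ}
    (hx : 2 * Q ≤ x) (n : ℕ) : 0 < (Gpoly k n).eval x := by
  rw [show x = Q * (x / Q) by field_simp, eval_Gpoly_mul hQ]
  exact mul_pos (pow_pos hQ0 n)
    (Chebyshev.S_eval_pos_of_two_le (by rw [le_div_iff₀ hQ0]; linarith) n)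

theorem eval_calG_pos_of_two_mul_le (hQ : Q ^ 2 = k - 1) (hQ0 : 0 < Q) {x : ℝ}
    (hx : 2 * Q ≤ x) : ∀ i : ℕ, 0 < (calG k i).eval x
  | 0 => by simp [calG, Fpoly]
  | i + 1 => by
    rw [calG_succ_eq_Gpoly_add, eval_add]
    exact add_pos (eval_Gpoly_pos_of_two_mul_le hQ hQ0 hx _)
      (eval_Gpoly_pos_of_two_mul_le hQ hQ0 hx _)

theorem eval_Gpoly_pos (hQ : Q ^ 2 = k - 1) (hQ0 : 0 < Q) {n : ℕ} {x : ℝ}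
    (hx : largestZeroGpoly Q n < x) : 0 < (Gpoly k n).eval x := by
  have hn : (1 : ℝ) ≤ n + 1 := by linarith [n.cast_nonneg (α := ℝ)]
  refine pos_of_two_mul_cos_lt hQ0 ⟨by positivity, div_le_self pi_pos.le hn⟩
    (fun x hx => eval_Gpoly_pos_of_two_mul_le hQ hQ0 hx n) (fun χ hχ0 hχ => ?_) hx
  have hnχ : (n + 1) * χ < π := by rwa [lt_div_iff₀' (by positivity)] at hχ
  have hχπ : χ < π := hχ.trans_le (div_le_self pi_pos.le hn)
  refine pos_of_mul_pos_right ?_ (sin_pos_of_pos_of_lt_pi hχ0 hχπ).le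
  rw [sin_mul_eval_Gpoly hQ]
  exact mul_pos (pow_pos hQ0 n) (sin_pos_of_pos_of_lt_pi (by positivity) hnχ)

theorem isGreatest_zeros_Gpoly (hQ : Q ^ 2 = k - 1) (hQ0 : 0 < Q) {n : ℕ} (hn : 1 ≤ n) :
    IsGreatest {x | (Gpoly k n).eval x = 0} (largestZeroGpoly Q n) := by
  refine ⟨?_, fun x hx => le_of_not_gt fun h => (eval_Gpoly_pos hQ hQ0 h).ne' hx⟩
  have hn1 : (2 : ℝ) ≤ n + 1 := by norm_cast; omega
  have hsin : 0 < sin (π / (n + 1)) := sin_pos_of_pos_of_lt_pi (by positivity)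
    (div_lt_self pi_pos (by linarith))
  have h := sin_mul_eval_Gpoly (k := k) hQ (π / (n + 1)) n
  rw [mul_div_cancel₀ _ (by positivity), sin_pi, mul_zero] at h
  exact (mul_eq_zero.1 h).resolve_left hsin.ne'

theorem eval_calG_pos (hQ : Q ^ 2 = k - 1) (hQ0 : 0 < Q) {i : ℕ} {x : ℝ}
    (hx : largestZeroGpoly Q (i + 1) < x) : 0 < (calG k (i + 1)).eval x := by
  have hi : (1 : ℝ) ≤ (i + 1 : ℕ) + 1 := by push_cast; linarith [i.cast_nonneg (α := ℝ)]
  refine pos_of_two_mul_cos_lt hQ0 ⟨by positivity, div_le_self pi_pos.le hi⟩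
    (fun x hx => eval_calG_pos_of_two_mul_le hQ hQ0 hx _) (fun χ hχ0 hχ => ?_) hx
  push_cast at hχ
  have hiχ : (i + 2) * χ < π := by rw [lt_div_iff₀' (by positivity)] at hχ; linarith
  have hχπ : χ < π := by nlinarith [i.cast_nonneg (α := ℝ)]
  refine pos_of_mul_pos_right ?_ (sin_pos_of_pos_of_lt_pi hχ0 hχπ).le
  rw [sin_mul_eval_calG hQ]
  have h2 := sin_pos_of_pos_of_lt_pi (by positivity) hiχ
  have h1 := sin_pos_of_pos_of_lt_pi (x := (i + 1) * χ) (by positivity) (by linarith)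
  positivity

theorem eval_calG_largestZeroGpoly_neg (hQ : Q ^ 2 = k - 1) (hQ0 : 0 < Q) {i : ℕ}
    (hi : 1 ≤ i) : (calG k (i + 1)).eval (largestZeroGpoly Q i) < 0 := by
  have hi1 : (2 : ℝ) ≤ i + 1 := by norm_cast; omega
  set ψ := π / (i + 1)
  have hsin : 0 < sin ψ := sin_pos_of_pos_of_lt_pi (by positivity)
    (div_lt_self pi_pos (by linarith))
  have hψ : (i + 1) * ψ = π := mul_div_cancel₀ _ (by positivity)
  have h := sin_mul_eval_calG (k := k) hQ ψ i
  rw [show (i + 2) * ψ = π + ψ by linarith, hψ, sin_pi, sin_add, sin_pi, cos_pi] at h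
  refine neg_of_mul_neg_right (a := sin ψ) ?_ hsin.le
  rw [largestZeroGpoly, h]
  nlinarith [mul_pos (mul_pos (pow_pos hQ0 i) hQ0) hsin]

theorem eval_Gpoly_nonpos (hQ : Q ^ 2 = k - 1) (hQ0 : 0 < Q) {n : ℕ} {x : ℝ}
    (hx₁ : largestZeroGpoly Q n < x) (hx₂ : x ≤ largestZeroGpoly Q (n + 1)) :
    (Gpoly k (n + 1)).eval x ≤ 0 ∧
      ((Gpoly k (n + 1)).eval x = 0 → x = largestZeroGpoly Q (n + 1)) := by
  have hn : (1 : ℝ) ≤ n + 1 := by linarith [n.cast_nonneg (α := ℝ)]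
  have hmem : ∀ m : ℝ, 1 ≤ m → π / m ∈ Set.Icc 0 π := fun m hm =>
    ⟨by positivity, div_le_self pi_pos.le hm⟩
  have h2Q : largestZeroGpoly Q (n + 1) ≤ 2 * Q := by
    unfold largestZeroGpoly; nlinarith [cos_le_one (π / ((n + 1 : ℕ) + 1))]
  have hx : |x| ≤ 2 * Q := abs_le.2
    ⟨by unfold largestZeroGpoly at hx₁; nlinarith [neg_one_le_cos (π / (n + 1))], hx₂.trans h2Q⟩
  obtain ⟨χ, hχ, rfl⟩ := exists_eq_two_mul_cos hQ0 hx
  unfold largestZeroGpoly at hx₁ hx₂ ⊢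
  push_cast at hx₂ ⊢
  have hlo : π / (n + 1 + 1) ≤ χ := (strictAntiOn_cos.le_iff_ge hχ (hmem _ (by linarith))).1
    (le_of_mul_le_mul_left hx₂ (by positivity))
  have hhi : χ < π / (n + 1) := (strictAntiOn_cos.lt_iff_gt (hmem _ hn) hχ).1
    (lt_of_mul_lt_mul_left hx₁ (by positivity))
  have hχ0 : 0 < χ := lt_of_lt_of_le (by positivity) hlo
  have hsin : 0 < sin χ := sin_pos_of_pos_of_lt_pi hχ0 (hhi.trans_le (hmem _ hn).2)
  have h1 : 0 ≤ (n + 1 + 1) * χ - π := by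
    rw [div_le_iff₀' (by positivity)] at hlo; linarith
  have h2 : (n + 1 + 1) * χ - π < π := by
    rw [lt_div_iff₀' (by positivity)] at hhi; nlinarith
  have hG := sin_mul_eval_Gpoly (k := k) hQ χ (n + 1)
  push_cast at hG
  rw [show (n + 1 + 1) * χ = ((n + 1 + 1) * χ - π) + π by ring, sin_add_pi] at hG
  constructor
  · refine nonpos_of_mul_nonpos_right ?_ hsin
    rw [hG]
    nlinarith [sin_nonneg_of_nonneg_of_le_pi h1 h2.le, pow_pos hQ0 (n + 1)]
  · intro h0
    rw [h0, mul_zero, zero_eq_mul, neg_eq_zero,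
      sin_eq_zero_iff_of_lt_of_lt (by linarith [pi_pos]) h2] at hG
    have hχ' := hG.resolve_left (pow_pos hQ0 _).ne'
    rw [show χ = π / (n + 1 + 1) from (eq_div_iff (by positivity)).2 (by linarith)]

end Zeros

theorem le_and_le_of_isGreatest_zeros_calG {k Q : ℝ} (hQ : Q ^ 2 = k - 1) (hQ0 : 0 < Q)
    {m p : ℕ} {θ r r' : ℝ} (hr : IsGreatest {x | (calG k (p + 1)).eval x = 0} r)
    (hr' : IsGreatest {x | (calG k (p + 2)).eval x = 0} r') (hrθ : r < θ) (hθr' : θ ≤ r')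
    (hθ₁ : largestZeroGpoly Q (m + 1) < θ) (hθ₂ : θ ≤ largestZeroGpoly Q (m + 2)) :
    m ≤ p ∧ p ≤ m + 1 := by
  have hmono := (largestZeroGpoly_strictMono hQ0).monotone
  constructor
  · by_contra! h
    have : largestZeroGpoly Q (p + 2) ≤ largestZeroGpoly Q (m + 1) := hmono (by omega)
    exact (eval_calG_pos (i := p + 1) hQ hQ0 (by linarith)).ne' hr'.1
  · by_contra! h
    have : largestZeroGpoly Q (m + 2) ≤ largestZeroGpoly Q p := hmono (by omega)
    have hpos := pos_of_gt_of_isGreatest_zeros (calG k (p + 1)).continuous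
      (fun x hx => eval_calG_pos_of_two_mul_le hQ hQ0 hx _) hr (by linarith)
    exact (eval_calG_largestZeroGpoly_neg hQ hQ0 (by omega)).not_gt hpos

theorem Nbound_add_three_sub_Mbound (k m : ℕ) (c₁ c₂ : ℝ) :
    Nbound k (m + 3) c₂ - Mbound k (m + 4) c₁
      = ((k : ℝ) - 1) ^ (m + 1) * (1 + k / c₂ - 2 * k / c₁) := by
  have hgeom := geom_sum_mul ((k : ℝ) - 1) (m + 1)
  simp only [Nbound, Mbound, Nat.reduceSubDiff, ← Finset.mul_sum]
  linear_combination hgeom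

theorem Nbound_add_four_sub_Mbound (k m : ℕ) (c₁ c₂ : ℝ) :
    Nbound k (m + 4) c₂ - Mbound k (m + 4) c₁
      = ((k : ℝ) - 1) ^ (m + 1) * (k + 1 + k * (k - 1) / c₂ - 2 * k / c₁) := by
  have hgeom := geom_sum_mul ((k : ℝ) - 1) (m + 1)
  simp only [Nbound, Mbound, Nat.reduceSubDiff, ← Finset.mul_sum, Finset.sum_range_succ _ (m + 1)]
  linear_combination hgeom

theorem one_add_div_sub_div_pos {K θ a b d : ℝ} (hθ : θ < K) (ha : 0 < a) (hb : 0 < b)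
    (hd : d ≤ 0) (hrec : d = θ * b - (K - 1) * a) :
    0 < 1 + K / ((a - d) / (b + a)) - 2 * K / ((a - d) / a) := by
  have had : 0 < a - d := by linarith
  have key : 1 + K / ((a - d) / (b + a)) - 2 * K / ((a - d) / a) = (K - θ) * b / (a - d) := by
    field_simp
    linear_combination -hrec
  rw [key]
  exact div_pos (mul_pos (by linarith) hb) had

theorem add_one_add_div_sub_div_nonneg {K θ a b d : ℝ} (hθ0 : 0 < θ) (hθ : θ < K)
    (ha : 0 < a) (hb : 0 < b) (hd : d ≤ 0) (hbd : 0 < d + b) (hrec : d = θ * b - (K - 1) * a) :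
    0 ≤ K + 1 + K * (K - 1) / ((K * b - θ * d) / (d + b)) - 2 * K / ((a - d) / a) ∧
      (K + 1 + K * (K - 1) / ((K * b - θ * d) / (d + b)) - 2 * K / ((a - d) / a) = 0 →
        d = 0) := by
  have had : 0 < a - d := by linarith
  have hbd' : 0 < K * b - θ * d := by nlinarith
  have hpos : 0 < K * (d + b) + (K + θ) * b := by nlinarith
  have key : K + 1 + K * (K - 1) / ((K * b - θ * d) / (d + b)) - 2 * K / ((a - d) / a)
      = (K - θ) * (-d) * (K * (d + b) + (K + θ) * b) / ((K * b - θ * d) * (a - d)) := by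
    field_simp
    linear_combination d * (K + θ) * hrec
  rw [key]
  refine ⟨by apply div_nonneg <;> apply mul_nonneg <;> nlinarith, fun h => ?_⟩
  simp only [div_eq_zero_iff, mul_eq_zero, neg_eq_zero] at h
  rcases h with ((h | h) | h) | (h | h) <;> first | exact h | linarith

section Bounds

variable {k : ℕ} {θ : ℝ} {m : ℕ}

theorem Mbound_lt_Nbound_add_three (hk : 2 ≤ k) (hθ : θ < k)
    (ha : 0 < (Gpoly k m).eval θ) (hb : 0 < (Gpoly k (m + 1)).eval θ)
    (hd : (Gpoly k (m + 2)).eval θ ≤ 0) :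
    Mbound k (m + 4) (-(Fpoly k (m + 2)).eval θ / (Gpoly k m).eval θ) <
      Nbound k (m + 3) (-(Fpoly k (m + 2)).eval θ / (calG k (m + 1)).eval θ) := by
  have hk1 : (0 : ℝ) < k - 1 := by
    have : (2 : ℝ) ≤ k := by exact_mod_cast hk
    linarith
  rw [← sub_pos, Nbound_add_three_sub_Mbound, Fpoly_add_two_eq_sub, calG_succ_eq_Gpoly_add]
  simp only [eval_sub, eval_add, neg_sub]
  exact mul_pos (pow_pos hk1 _) (one_add_div_sub_div_pos hθ ha hb hd (eval_Gpoly_add_two _ _ _))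

theorem Mbound_le_Nbound_add_four (hk : 2 ≤ k) (hθ0 : 0 < θ) (hθ : θ < k) {c₁ c₂ : ℝ}
    (ha : 0 < (Gpoly k m).eval θ) (hb : 0 < (Gpoly k (m + 1)).eval θ)
    (hd : (Gpoly k (m + 2)).eval θ ≤ 0) (hbd : 0 < (calG k (m + 2)).eval θ)
    (hc₁ : c₁ = -(Fpoly k (m + 2)).eval θ / (Gpoly k m).eval θ)
    (hc₂ : c₂ = -(Fpoly k (m + 3)).eval θ / (calG k (m + 2)).eval θ) :
    Mbound k (m + 4) c₁ ≤ Nbound k (m + 4) c₂ ∧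
      (Mbound k (m + 4) c₁ = Nbound k (m + 4) c₂ →
        c₁ = 1 ∧ c₂ = k ∧ (Gpoly k (m + 2)).eval θ = 0) := by
  have hk1 : (0 : ℝ) < k - 1 := by
    have : (2 : ℝ) ≤ k := by exact_mod_cast hk
    linarith
  have hF : -(Fpoly k (m + 3)).eval θ
      = k * (Gpoly k (m + 1)).eval θ - θ * (Gpoly k (m + 2)).eval θ := by
    rw [Fpoly_add_two_eq_sub, eval_sub, eval_Gpoly_add_two]
    ring
  rw [Fpoly_add_two_eq_sub, eval_sub, neg_sub] at hc₁
  rw [calG_succ_eq_Gpoly_add, eval_add] at hc₂ hbd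
  rw [hF] at hc₂
  obtain ⟨hnonneg, heq⟩ :=
    add_one_add_div_sub_div_nonneg hθ0 hθ ha hb hd hbd (eval_Gpoly_add_two _ _ _)
  rw [← hc₁, ← hc₂] at hnonneg heq
  have hdiff := Nbound_add_four_sub_Mbound k m c₁ c₂
  refine ⟨by nlinarith [pow_pos hk1 (m + 1)], fun h => ?_⟩
  have hd0 := heq (by
    rw [h, sub_self, zero_eq_mul] at hdiff
    exact hdiff.resolve_left (pow_pos hk1 _).ne')
  rw [hd0] at hc₁ hc₂
  refine ⟨?_, ?_, hd0⟩
  · rw [hc₁, sub_zero, div_self ha.ne']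
  · rw [hc₂, mul_zero, sub_zero, zero_add, mul_div_assoc, div_self hb.ne', mul_one]

end Bounds

/-- Theorem 4.11: the bipartite bound `M(k,t₁,c₁)` is at most the general bound `N(k,t₂,c₂)`,
with equality only if `t₁ = t₂`, `θ = λ^{(t₁-2)}`, `c₁ = 1` and `c₂ = k`. -/
theorem stmt14 (k t₁ t₂ : ℕ) (hk : 2 ≤ k) (θ : ℝ) (hθ0 : 0 < θ)
    (hθ : θ < 2 * Real.sqrt ((k : ℝ) - 1))
    (ht₁ : 4 ≤ t₁) (ht₂ : 3 ≤ t₂) (lamA lamB rA rB c₁ c₂ : ℝ)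
    (hlamA : IsGreatest {x : ℝ | (Gpoly (k : ℝ) (t₁ - 3)).eval x = 0} lamA)
    (hlamB : IsGreatest {x : ℝ | (Gpoly (k : ℝ) (t₁ - 2)).eval x = 0} lamB)
    (hrA : IsGreatest {x : ℝ | (calG (k : ℝ) (t₂ - 2)).eval x = 0} rA)
    (hrB : IsGreatest {x : ℝ | (calG (k : ℝ) (t₂ - 1)).eval x = 0} rB)
    (h1 : lamA < θ) (h2 : θ ≤ lamB) (h3 : rA < θ) (h4 : θ ≤ rB)
    (hc₁ : c₁ = -(Fpoly (k : ℝ) (t₁ - 2)).eval θ / (Gpoly (k : ℝ) (t₁ - 4)).eval θ)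
    (hc₂ : c₂ = -(Fpoly (k : ℝ) (t₂ - 1)).eval θ / (calG (k : ℝ) (t₂ - 2)).eval θ) :
    Mbound k t₁ c₁ ≤ Nbound k t₂ c₂ ∧
      (Mbound k t₁ c₁ = Nbound k t₂ c₂ →
        t₁ = t₂ ∧ θ = lamB ∧ c₁ = 1 ∧ c₂ = (k : ℝ)) := by
  set Q := Real.sqrt ((k : ℝ) - 1)
  have hk1 : (0 : ℝ) < k - 1 := by
    have : (2 : ℝ) ≤ k := by exact_mod_cast hk
    linarith
  have hQ : Q ^ 2 = k - 1 := Real.sq_sqrt hk1.le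
  have hQ0 : 0 < Q := Real.sqrt_pos.2 hk1
  have hθk : θ < k := hθ.trans_le (by nlinarith [sq_nonneg (Q - 1)])
  obtain ⟨m, rfl⟩ : ∃ m, t₁ = m + 4 := ⟨t₁ - 4, by omega⟩
  obtain ⟨p, rfl⟩ : ∃ p, t₂ = p + 3 := ⟨t₂ - 3, by omega⟩
  simp only [Nat.reduceSubDiff] at hlamA hlamB hrA hrB hc₁ hc₂
  obtain rfl := hlamA.unique (isGreatest_zeros_Gpoly hQ hQ0 (by omega))
  obtain rfl := hlamB.unique (isGreatest_zeros_Gpoly hQ hQ0 (by omega))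
  have ha := eval_Gpoly_pos (k := k) hQ hQ0
    ((largestZeroGpoly_strictMono hQ0 m.lt_succ_self).trans h1)
  have hb := eval_Gpoly_pos (k := k) hQ hQ0 h1
  obtain ⟨hd, hd0⟩ := eval_Gpoly_nonpos (k := k) hQ hQ0 h1 h2
  obtain ⟨hmp, hpm⟩ := le_and_le_of_isGreatest_zeros_calG hQ hQ0 hrA hrB h3 h4 h1 h2
  obtain rfl | rfl : p = m ∨ p = m + 1 := by omega
  · subst hc₁ hc₂
    have hlt := Mbound_lt_Nbound_add_three hk hθk ha hb hd
    exact ⟨hlt.le, fun h => absurd h hlt.ne⟩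
  · have hbd := pos_of_gt_of_isGreatest_zeros (calG (k : ℝ) (m + 2)).continuous
      (fun x hx => eval_calG_pos_of_two_mul_le hQ hQ0 hx _) hrA h3
    obtain ⟨hle, heq⟩ := Mbound_le_Nbound_add_four hk hθ0 hθk ha hb hd hbd hc₁ hc₂
    refine ⟨hle, fun h => ?_⟩
    obtain ⟨hc₁1, hc₂k, hzero⟩ := heq h
    exact ⟨rfl, hd0 hzero, hc₁1, hc₂k⟩
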